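/- For all m,n ≥ 0 and all indices 0 ≤ i < F(m), 0 ≤ j < F(n), the (i,j) entry of the Fibonacci array f_{m,n} equals the pair (f_m[i], f_n[j]), where f_m[i] and f_n[j] denote the i-th letter of the 1D Fibonacci word f_m and the j-th letter of f_n (letters coded a=0, b=1). In particular, every row of f_{m,n} is a copy of the 1D Fibonacci word f_n (over {d,c} or over {b,a} according to the row), and every column of f_{m,n} is a copy of f_m (over {d,b} or over {c,a} according to the column). -/

import Mathlib

/-- Fibonacci numbers: F(0)=1, F(1)=1, F(n+2)=F(n+1)+F(n). -/
def F : ℕ → ℕ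
  | 0 => 1
  | 1 => 1
  | n + 2 => F (n + 1) + F n

/-- Finite Fibonacci words over {a,b} coded as Fin 2 (a=0, b=1). -/
def fibWord : ℕ → List (Fin 2)
  | 0 => [0]
  | 1 => [1]
  | n + 2 => fibWord (n + 1) ++ fibWord n

/-- The Fibonacci arrays f_{m,n} over {a,b,c,d} coded as Fin 2 × Fin 2,
with a=(0,0), b=(0,1), c=(1,0), d=(1,1); `fibArr m n i j` is the (i,j) entry
(0-indexed, only indices i < F m, j < F n are meaningful). -/
def fibArr : ℕ → ℕ → ℕ → ℕ → Fin 2 × Fin 2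
  | 0, 0, _, _ => (0, 0)
  | 0, 1, _, _ => (0, 1)
  | 1, 0, _, _ => (1, 0)
  | 1, 1, _, _ => (1, 1)
  | 0, n + 2, i, j =>
      if j < F (n + 1) then fibArr 0 (n + 1) i j else fibArr 0 n i (j - F (n + 1))
  | 1, n + 2, i, j =>
      if j < F (n + 1) then fibArr 1 (n + 1) i j else fibArr 1 n i (j - F (n + 1))
  | m + 2, k, i, j =>
      if i < F (m + 1) then fibArr (m + 1) k i j else fibArr m k (i - F (m + 1)) j
  termination_by m n => (m, n)

/-- The r × l subarray of u with top-left entry at (i,j). -/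
def subarr (u : ℕ → ℕ → Fin 2 × Fin 2) (i j r l : ℕ) : Fin r × Fin l → Fin 2 × Fin 2 :=
  fun p => u (i + p.1.val) (j + p.2.val)

/-- Number of square occurrences in a finite word. -/
noncomputable def sqOcc (w : List (Fin 2)) : ℕ :=
  {p : ℕ × ℕ | 1 ≤ p.2 ∧ p.1 + 2 * p.2 ≤ w.length ∧
    ∀ t < p.2, w.getD (p.1 + t) 0 = w.getD (p.1 + p.2 + t) 0}.ncard

/-- R(n): number of square occurrences in f_n. -/
noncomputable def R (n : ℕ) : ℕ := sqOcc (fibWord n)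

/-! Both the letters of `fibWord n` and the rows and columns of `fibArr` obey the same splitting
recurrence `g (n + 2) j = if j < F (n + 1) then g (n + 1) j else g n (j - F (n + 1))`, and a solution
of it is determined on the valid indices `j < F n` by its values at `(0, 0)` and `(1, 0)`. So the first
rows of `f_{0,n}` and `f_{1,n}` are read off `f_n`, and then every column of `f_{m,n}` off `f_m`. -/

theorem F_add_two (n : ℕ) : F (n + 2) = F (n + 1) + F n := rfl

theorem lt_F_iff_eq_zero {n : ℕ} (hn : n ≤ 1) {j : ℕ} : j < F n ↔ j = 0 := by
  interval_cases n <;> simp [F]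

def IsFibSplit {α : Type*} (g : ℕ → ℕ → α) : Prop :=
  ∀ n j, g (n + 2) j = if j < F (n + 1) then g (n + 1) j else g n (j - F (n + 1))

namespace IsFibSplit

variable {α β : Type*} {g h : ℕ → ℕ → α}

theorem map (hg : IsFibSplit g) (f : α → β) : IsFibSplit fun n j => f (g n j) := by
  intro n j
  simp only [hg n j, apply_ite f]

theorem eqOn (hg : IsFibSplit g) (hh : IsFibSplit h) (h₀ : g 0 0 = h 0 0) (h₁ : g 1 0 = h 1 0) :
    ∀ n, ∀ j < F n, g n j = h n j
  | 0, j, hj => by rwa [(lt_F_iff_eq_zero zero_le_one).1 hj]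
  | 1, j, hj => by rwa [(lt_F_iff_eq_zero le_rfl).1 hj]
  | n + 2, j, hj => by
    rw [hg, hh]
    split_ifs with hlt
    · exact eqOn hg hh h₀ h₁ (n + 1) j hlt
    · exact eqOn hg hh h₀ h₁ n _ (by rw [F_add_two] at hj; omega)

end IsFibSplit

theorem fibWord_length (n : ℕ) : (fibWord n).length = F n := by
  induction n using fibWord.induct with
  | case1 | case2 => rfl
  | case3 n ih₁ ih₀ => simp [fibWord, F, ih₁, ih₀]

theorem isFibSplit_fibWord_getD : IsFibSplit fun n j => (fibWord n).getD j 0 := by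
  intro n j
  simp only [fibWord, List.getD_eq_getElem?_getD, List.getElem?_append, fibWord_length]
  split_ifs <;> rfl

theorem isFibSplit_fibArr_row {m : ℕ} (hm : m ≤ 1) (i : ℕ) :
    IsFibSplit fun n j => fibArr m n i j := by
  intro n j
  interval_cases m <;> dsimp only <;> rw [fibArr]

theorem isFibSplit_fibArr_col (n j : ℕ) : IsFibSplit fun m i => fibArr m n i j := by
  intro m i
  dsimp only
  rw [fibArr]

theorem fibArr_row_zero_of_le_one {m : ℕ} (hm : m ≤ 1) (n j : ℕ) (hj : j < F n) :
    fibArr m n 0 j = ((fibWord m).getD 0 0, (fibWord n).getD j 0) :=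
  (isFibSplit_fibArr_row hm 0).eqOn (isFibSplit_fibWord_getD.map ((fibWord m).getD 0 0, ·))
    (by interval_cases m <;> simp [fibArr, fibWord])
    (by interval_cases m <;> simp [fibArr, fibWord]) n j hj

/-- For all m,n ≥ 0 and 0 ≤ i < F(m), 0 ≤ j < F(n), the (i,j) entry of the
Fibonacci array f_{m,n} is the pair (f_m[i], f_n[j]) of letters of the 1D Fibonacci words
(letters coded a=0, b=1). In particular every row of f_{m,n} is a copy of f_n and every
column a copy of f_m, over the appropriate two-letter alphabet. -/
theorem stmt11 (m n i j : ℕ) (hi : i < F m) (hj : j < F n) :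
    fibArr m n i j = ((fibWord m).getD i 0, (fibWord n).getD j 0) :=
  (isFibSplit_fibArr_col n j).eqOn (isFibSplit_fibWord_getD.map (·, (fibWord n).getD j 0))
    (fibArr_row_zero_of_le_one zero_le_one n j hj) (fibArr_row_zero_of_le_one le_rfl n j hj) m i hi
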